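/- arXiv:1811.06188 — 3 statements merged into one kernel-verified Lean document; each statement's English description precedes it below -/
import Mathlib

section
/- Let X and Y be δ-pseudocomplexes of A-modules with monodromies μ_X and μ_Y, and let f : X → Y be a pseudochain map with d_Y^i ∘ f^i − f^{i+1} ∘ d_X^i = δ • ν^i for all i. Assume that multiplication by δ is injective on each module Y^j. Then for every i one has μ_Y^i ∘ f^i − f^{i+2} ∘ μ_X^i = d_Y^{i+1} ∘ ν^i + ν^{i+1} ∘ d_X^i; that is, f ∘ μ_X and μ_Y ∘ f are chain homotopic via the homotopy ν. Moreover, if multiplication by δ is injective on each module X^j, then the monodromy μ_X is uniquely determined by the differential d_X. -/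
/-!
Composing the two defining identities gives `δ • (μ_Y ∘ f − f ∘ μ_X) = δ • (d_Y ∘ ν + ν ∘ d_X)`,
since both sides equal `d_Y ∘ d_Y ∘ f − f ∘ d_X ∘ d_X`; then `δ` is cancelled on the target.
Uniqueness of the monodromy is the same cancellation applied to `δ • μ_X = d_X ∘ d_X = δ • μ_X'`.
-/

theorem LinearMap.smul_right_injective {A M N : Type*} [CommRing A]
    [AddCommGroup M] [Module A M] [AddCommGroup N] [Module A N] {δ : A}
    (h : Function.Injective (fun y : N => δ • y)) :
    Function.Injective (fun g : M →ₗ[A] N => δ • g) :=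
  fun _ _ hg => LinearMap.ext fun x => h (LinearMap.congr_fun hg x)

theorem smul_monodromy_comp_sub_comp_monodromy {A X₀ X₁ X₂ Y₀ Y₁ Y₂ : Type*} [CommRing A]
    [AddCommGroup X₀] [Module A X₀] [AddCommGroup X₁] [Module A X₁]
    [AddCommGroup X₂] [Module A X₂] [AddCommGroup Y₀] [Module A Y₀]
    [AddCommGroup Y₁] [Module A Y₁] [AddCommGroup Y₂] [Module A Y₂] {δ : A}
    {dX₀ : X₀ →ₗ[A] X₁} {dX₁ : X₁ →ₗ[A] X₂} {dY₀ : Y₀ →ₗ[A] Y₁} {dY₁ : Y₁ →ₗ[A] Y₂}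
    {μX : X₀ →ₗ[A] X₂} {μY : Y₀ →ₗ[A] Y₂}
    {f₀ : X₀ →ₗ[A] Y₀} {f₁ : X₁ →ₗ[A] Y₁} {f₂ : X₂ →ₗ[A] Y₂}
    {ν₀ : X₀ →ₗ[A] Y₁} {ν₁ : X₁ →ₗ[A] Y₂}
    (hμX : dX₁ ∘ₗ dX₀ = δ • μX) (hμY : dY₁ ∘ₗ dY₀ = δ • μY)
    (hν₀ : dY₀ ∘ₗ f₀ - f₁ ∘ₗ dX₀ = δ • ν₀) (hν₁ : dY₁ ∘ₗ f₁ - f₂ ∘ₗ dX₁ = δ • ν₁) :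
    δ • (μY ∘ₗ f₀ - f₂ ∘ₗ μX) = δ • (dY₁ ∘ₗ ν₀ + ν₁ ∘ₗ dX₀) :=
  calc δ • (μY ∘ₗ f₀ - f₂ ∘ₗ μX)
      = (dY₁ ∘ₗ dY₀) ∘ₗ f₀ - f₂ ∘ₗ (dX₁ ∘ₗ dX₀) := by
        rw [hμX, hμY, smul_sub, LinearMap.smul_comp, LinearMap.comp_smul]
    _ = dY₁ ∘ₗ (dY₀ ∘ₗ f₀ - f₁ ∘ₗ dX₀) + (dY₁ ∘ₗ f₁ - f₂ ∘ₗ dX₁) ∘ₗ dX₀ := by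
        simp only [LinearMap.comp_sub, LinearMap.sub_comp, LinearMap.comp_assoc]
        abel
    _ = δ • (dY₁ ∘ₗ ν₀ + ν₁ ∘ₗ dX₀) := by
        rw [hν₀, hν₁, LinearMap.comp_smul, LinearMap.smul_comp, smul_add]

theorem statement_14 {A : Type*} [CommRing A] (δ : A)
    (X Y : ℤ → Type*)
    [∀ i, AddCommGroup (X i)] [∀ i, Module A (X i)]
    [∀ i, AddCommGroup (Y i)] [∀ i, Module A (Y i)]
    (dX : ∀ i, X i →ₗ[A] X (i + 1)) (dY : ∀ i, Y i →ₗ[A] Y (i + 1))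
    -- monodromies for `X` and `Y`
    (μX : ∀ i, X i →ₗ[A] X (i + 1 + 1)) (μY : ∀ i, Y i →ₗ[A] Y (i + 1 + 1))
    (hμX : ∀ i, (dX (i + 1)).comp (dX i) = δ • μX i)
    (hμY : ∀ i, (dY (i + 1)).comp (dY i) = δ • μY i)
    -- a pseudochain map `f : X → Y` together with its witnesses `ν`
    (f : ∀ i, X i →ₗ[A] Y i)
    (ν : ∀ i, X i →ₗ[A] Y (i + 1))
    (hν : ∀ i, (dY i).comp (f i) - (f (i + 1)).comp (dX i) = δ • ν i)
    -- multiplication by `δ` is injective on each `Y j`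
    (hinjY : ∀ j, Function.Injective (fun y : Y j => δ • y)) :
    -- `μ_Y ∘ f − f ∘ μ_X = d_Y ∘ ν + ν ∘ d_X`, i.e. `f ∘ μ_X ≃ μ_Y ∘ f` via `ν`
    (∀ i, (μY i).comp (f i) - (f (i + 1 + 1)).comp (μX i) =
      (dY (i + 1)).comp (ν i) + (ν (i + 1)).comp (dX i)) ∧
    -- moreover, if multiplication by `δ` is injective on each `X j`,
    -- the monodromy of `X` is uniquely determined by the differential
    ((∀ j, Function.Injective (fun x : X j => δ • x)) →
      ∀ μX' : ∀ i, X i →ₗ[A] X (i + 1 + 1),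
        (∀ i, (dX (i + 1)).comp (dX i) = δ • μX' i) → ∀ i, μX' i = μX i) := by
  refine ⟨fun i => ?_, fun hinjX μX' hμX' i => ?_⟩
  · exact LinearMap.smul_right_injective (hinjY _)
      (smul_monodromy_comp_sub_comp_monodromy (hμX i) (hμY i) (hν i) (hν (i + 1)))
  · exact LinearMap.smul_right_injective (hinjX _) ((hμX' i).symm.trans (hμX i))
end

section
/- The sets Y_1, Y_2, …, Y_n are pairwise disjoint and their union is all of P. -/
/-- `P_k` collected into a single set of pairs `(X, k)`: `X` is a proper subset of
`{0, 1, …, n−1}`, `|X| ≤ n−1−|k|`, and `n−1−k−|X|` is even. -/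
def Pset (n : ℕ) : Set (Finset (Fin n) × ℤ) :=
  {q | q.1 ≠ Finset.univ ∧ (q.1.card : ℤ) ≤ (n : ℤ) - 1 - |q.2| ∧
       Even ((n : ℤ) - 1 - q.2 - q.1.card)}

/-- `U_m`: the pairs `(X, k) ∈ P` with `k = n−1−|X|−2m`. -/
def Uset (n : ℕ) (m : ℕ) : Set (Finset (Fin n) × ℤ) :=
  {q | q ∈ Pset n ∧ q.2 = (n : ℤ) - 1 - q.1.card - 2 * m}

/-- `Y_p` (for `1 ≤ p ≤ n`): the pairs `(X, k) ∈ U_m` (for some `m`) with `p−1 ∉ X`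
and `|X ∩ {0, 1, …, p−2}| = p−1−m`. -/
def Yset (n : ℕ) (p : ℕ) : Set (Finset (Fin n) × ℤ) :=
  {q | ∃ m : ℕ, q ∈ Uset n m ∧ (∀ x ∈ q.1, (x : ℕ) ≠ p - 1) ∧
       ((q.1.filter (fun x : Fin n => (x : ℕ) < p - 1)).card : ℤ) = (p : ℤ) - 1 - m}

/-!
Let `Xᶜ` be the complement of `X`. Membership of `(X, k)` in `Y_p ∩ U_m` says exactly that
`p − 1 ∈ Xᶜ` and that `m` elements of `Xᶜ` lie below `p − 1`, i.e. `p − 1` is the `m`-th element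
of `Xᶜ` (counting from `0`). The index `m` is determined by `k`, and the inequality
`|X| ≤ n − 1 − |k|` forces `m < |Xᶜ|`; since `y ↦ #{z ∈ Xᶜ | z < y}` is a bijection from `Xᶜ`
onto `{0, …, |Xᶜ| − 1}`, there is exactly one such `p`.
-/

open Finset

section rank
variable {α : Type*} [LinearOrder α] (S : Finset α)

theorem strictMonoOn_card_filter_lt : StrictMonoOn (fun y ↦ #{z ∈ S | z < y}) S := by
  intro y hy y' hy' hlt
  refine card_lt_card ((ssubset_iff_of_subset ?_).2 ⟨y, ?_, ?_⟩)
  · exact monotone_filter_right S fun z _ (hz : z < y) ↦ hz.trans hlt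
  · simpa [hlt] using hy
  · simp

theorem bijOn_card_filter_lt : Set.BijOn (fun y ↦ #{z ∈ S | z < y}) S (range #S) := by
  have hmaps : Set.MapsTo (fun y ↦ #{z ∈ S | z < y}) S (range #S) := fun y hy ↦ by
    simpa using card_lt_card ((ssubset_iff_of_subset (filter_subset _ S)).2 ⟨y, hy, by simp⟩)
  have hinj := (strictMonoOn_card_filter_lt S).injOn
  exact ⟨hmaps, hinj, surjOn_of_injOn_of_card_le _ hmaps hinj (by simp)⟩

end rank

section Fin
variable {n : ℕ}

theorem card_filter_compl_lt_add_card_filter_lt (X : Finset (Fin n)) (y : Fin n) :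
    #{z ∈ Xᶜ | z < y} + #{z ∈ X | z < y} = y := by
  rw [← card_union_of_disjoint (disjoint_filter_filter disjoint_compl_left), ← filter_union,
    union_comm, union_compl, filter_gt_eq_Iio, Fin.card_Iio]

theorem mem_Yset_succ_iff (y : Fin n) (q : Finset (Fin n) × ℤ) :
    q ∈ Yset n (y + 1) ↔ ∃ m : ℕ, q ∈ Uset n m ∧ y ∈ q.1ᶜ ∧ #{z ∈ q.1ᶜ | z < y} = m := by
  have hsplit := card_filter_compl_lt_add_card_filter_lt q.1 y
  simp only [Yset, Nat.add_sub_cancel, mem_compl]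
  refine exists_congr fun m ↦ and_congr_right fun _ ↦ and_congr ?_ ?_
  · exact ⟨fun h hy ↦ h y hy rfl, fun h x hx hxy ↦ h (Fin.ext hxy ▸ hx)⟩
  · simp only [Fin.val_fin_lt]
    push_cast
    omega

theorem eq_of_mem_Uset {m m' : ℕ} {q : Finset (Fin n) × ℤ} (h : q ∈ Uset n m)
    (h' : q ∈ Uset n m') : m = m' := by
  have := h.2.symm.trans h'.2
  omega

theorem exists_mem_Uset_of_mem_Pset {q : Finset (Fin n) × ℤ} (hq : q ∈ Pset n) :
    ∃ m < #q.1ᶜ, q ∈ Uset n m := by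
  obtain ⟨-, hcard, r, hr⟩ := id hq
  have hcompl : #q.1ᶜ + #q.1 = n := by
    rw [card_compl_add_card, Fintype.card_fin]
  have := le_abs_self q.2
  have := neg_le_abs q.2
  exact ⟨r.toNat, by omega, hq, by omega⟩

end Fin

theorem statement_16_general (n : ℕ) :
    -- the sets `Y_1, …, Y_n` are pairwise disjoint …
    (∀ p q : ℕ, 1 ≤ p → p ≤ n → 1 ≤ q → q ≤ n → p ≠ q → Disjoint (Yset n p) (Yset n q)) ∧
    -- … and their union is all of `P`
    (⋃ p ∈ Set.Icc 1 n, Yset n p) = Pset n := by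
  constructor
  · intro p p' hp hpn hp' hp'n hne
    obtain ⟨y, rfl⟩ : ∃ y : Fin n, (y : ℕ) + 1 = p := ⟨⟨p - 1, by omega⟩, by simp only; omega⟩
    obtain ⟨y', rfl⟩ : ∃ y' : Fin n, (y' : ℕ) + 1 = p' := ⟨⟨p' - 1, by omega⟩, by simp only; omega⟩
    refine Set.disjoint_left.2 fun q hq hq' ↦ hne ?_
    obtain ⟨m, hm, hy, hrank⟩ := (mem_Yset_succ_iff y q).1 hq
    obtain ⟨m', hm', hy', hrank'⟩ := (mem_Yset_succ_iff y' q).1 hq'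
    have hm_eq : m = m' := eq_of_mem_Uset hm hm'
    rw [(bijOn_card_filter_lt q.1ᶜ).injOn hy hy' (by rw [hrank, hrank', hm_eq])]
  · refine Set.Subset.antisymm (Set.iUnion₂_subset fun p _ q ⟨_, hm, _⟩ ↦ hm.1) fun q hq ↦ ?_
    obtain ⟨m, hmlt, hm⟩ := exists_mem_Uset_of_mem_Pset hq
    obtain ⟨y, hy, hrank⟩ := (bijOn_card_filter_lt q.1ᶜ).surjOn (mem_range.2 hmlt)
    exact Set.mem_biUnion (x := (y : ℕ) + 1) ⟨by omega, y.isLt⟩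
      ((mem_Yset_succ_iff y q).2 ⟨m, hm, hy, hrank⟩)

theorem statement_16 (n : ℕ) (hn : 2 ≤ n) :
    -- the sets `Y_1, …, Y_n` are pairwise disjoint …
    (∀ p q : ℕ, 1 ≤ p → p ≤ n → 1 ≤ q → q ≤ n → p ≠ q → Disjoint (Yset n p) (Yset n q)) ∧
    -- … and their union is all of `P`
    (⋃ p ∈ Set.Icc 1 n, Yset n p) = Pset n :=
  statement_16_general n
end

section
/- There exists a group homomorphism flat : Br_extg → B_n with flat(f_i) = σ_i for 1 ≤ i ≤ n−1 and flat(ω) = σ_1 σ_2 ⋯ σ_{n−1}; it necessarily satisfies flat(f_0) = σ_{n−1}^{−1} ⋯ σ_2^{−1} · σ_1 · σ_2 ⋯ σ_{n−1}. Under this homomorphism, flat(y_n) = 1 and, for 1 ≤ i ≤ n−1, flat(y_i) = j_i := σ_i σ_{i+1} ⋯ σ_{n−1} · σ_{n−1} ⋯ σ_{i+1} σ_i (the i-th rightward Jucys–Murphy braid); consequently flat(ω^n) = j_1 j_2 ⋯ j_{n−1} is the full twist braid (σ_1 σ_2 ⋯ σ_{n−1})^n. -/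
/-- Generators of the cylindrical braid group: `f i` for `i ∈ ℤ/nℤ`, and `ω`. -/
inductive ExtGen (n : ℕ) : Type
  | f : ZMod n → ExtGen n
  | om : ExtGen n

open FreeGroup in
/-- The defining relations of the cylindrical braid group `Br_extg`:
`f_i f_{i+1} f_i = f_{i+1} f_i f_{i+1}` (imposed only when `n ≥ 3`),
`f_i f_j = f_j f_i` for `j ∉ {i−1, i, i+1}`, and `ω f_i ω⁻¹ = f_{i+1}`. -/
def extRels (n : ℕ) : Set (FreeGroup (ExtGen n)) :=
  {r | (∃ i : ZMod n, 3 ≤ n ∧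
          r = of (ExtGen.f i) * of (ExtGen.f (i + 1)) * of (ExtGen.f i) *
              (of (ExtGen.f (i + 1)) * of (ExtGen.f i) * of (ExtGen.f (i + 1)))⁻¹) ∨
       (∃ i j : ZMod n, j ≠ i - 1 ∧ j ≠ i ∧ j ≠ i + 1 ∧
          r = of (ExtGen.f i) * of (ExtGen.f j) * (of (ExtGen.f j) * of (ExtGen.f i))⁻¹) ∨
       (∃ i : ZMod n,
          r = of ExtGen.om * of (ExtGen.f i) * (of ExtGen.om)⁻¹ * (of (ExtGen.f (i + 1)))⁻¹)}

/-- The cylindrical braid group `Br_extg`. -/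
abbrev BrExt (n : ℕ) : Type := PresentedGroup (extRels n)

/-- The generator `f_i` of `Br_extg`. -/
def fB (n : ℕ) (i : ZMod n) : BrExt n := PresentedGroup.of (ExtGen.f i)

/-- The generator `ω` of `Br_extg`. -/
def omB (n : ℕ) : BrExt n := PresentedGroup.of ExtGen.om

/-- `y_i = f_{i−1}⁻¹ ⋯ f_2⁻¹ f_1⁻¹ · ω · f_{n−1} f_{n−2} ⋯ f_{i+1} f_i`, for `1 ≤ i ≤ n`. -/
def yB (n : ℕ) (i : ℕ) : BrExt n :=
  (((List.range (i - 1)).reverse.map (fun k => (fB n ((k + 1 : ℕ) : ZMod n))⁻¹)).prod)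
    * omB n *
  (((List.range (n - i)).map (fun k => fB n ((n - 1 - k : ℕ) : ZMod n))).prod)

/-- `w_λ = y_1^{x_1} y_2^{x_2} ⋯ y_n^{x_n}` for `λ = (x_1, …, x_n) ∈ ℤ^n`. -/
def wB (n : ℕ) (lam : Fin n → ℤ) : BrExt n :=
  (List.ofFn (fun k : Fin n => yB n ((k : ℕ) + 1) ^ lam k)).prod

open FreeGroup in
/-- The defining relations of the Artin braid group `B_n` on the generators
`σ_1, …, σ_{n−1}` (the index `k : Fin (n−1)` stands for `σ_{k+1}`):
`σ_i σ_{i+1} σ_i = σ_{i+1} σ_i σ_{i+1}` and `σ_i σ_j = σ_j σ_i` for `|i−j| ≥ 2`. -/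
def artinRels (n : ℕ) : Set (FreeGroup (Fin (n - 1))) :=
  {r | (∃ i j : Fin (n - 1), (i : ℕ) + 1 = (j : ℕ) ∧
          r = of i * of j * of i * (of j * of i * of j)⁻¹) ∨
       (∃ i j : Fin (n - 1), (i : ℕ) + 2 ≤ (j : ℕ) ∧
          r = of i * of j * (of j * of i)⁻¹)}

/-- The Artin braid group `B_n` on `n` strands. -/
abbrev ArtinB (n : ℕ) : Type := PresentedGroup (artinRels n)

/-- The generator `σ_i` of `B_n`, for `1 ≤ i ≤ n−1` (and `1` for other values of `i`). -/
def sgA (n : ℕ) (i : ℕ) : ArtinB n :=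
  if h : 1 ≤ i ∧ i ≤ n - 1 then PresentedGroup.of (⟨i - 1, by omega⟩ : Fin (n - 1)) else 1

/-- `σ_1 σ_2 ⋯ σ_{n−1}`. -/
def halfTwist (n : ℕ) : ArtinB n := ((List.range (n - 1)).map (fun t => sgA n (t + 1))).prod

/-- The `i`-th rightward Jucys–Murphy braid
`j_i = σ_i σ_{i+1} ⋯ σ_{n−1} · σ_{n−1} ⋯ σ_{i+1} σ_i`. -/
def jmB (n : ℕ) (i : ℕ) : ArtinB n :=
  (((List.range (n - i)).map (fun t => sgA n (i + t))).prod) *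
  (((List.range (n - i)).map (fun t => sgA n (n - 1 - t))).prod)

/-- `σ_{n−1}⁻¹ ⋯ σ_2⁻¹ · σ_1 · σ_2 ⋯ σ_{n−1}`. -/
def f0Target (n : ℕ) : ArtinB n :=
  (((List.range (n - 2)).map (fun t => (sgA n (n - 1 - t))⁻¹)).prod) * sgA n 1 *
  (((List.range (n - 2)).map (fun t => sgA n (t + 2))).prod)

/-- The defining property of the flattening homomorphism:
`flat (f_i) = σ_i` for `1 ≤ i ≤ n−1`, and `flat (ω) = σ_1 σ_2 ⋯ σ_{n−1}`. -/
def IsFlattening (n : ℕ) (φ : BrExt n →* ArtinB n) : Prop :=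
  (∀ i : ℕ, 1 ≤ i → i ≤ n - 1 → φ (fB n (i : ZMod n)) = sgA n i) ∧
  φ (omB n) = halfTwist n


/-!
Write `δ = σ_1 ⋯ σ_{n−1}`. Conjugation by `δ` sends `σ_k` to `σ_{k+1}` for `k ≤ n − 2`, and
`δ² σ_{n−1} δ⁻² = σ_1`, so `δ^n` commutes with `σ_1`. Hence `f_i ↦ δ^{i−1} σ_1 δ^{1−i}` is well
defined on `ℤ/nℤ`, and the cylindrical relations become conjugates of braid relations between
`σ_1` and `σ_2` or `σ_k`. The formula for `y_i` telescopes because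
`δ = (σ_1 ⋯ σ_{i−1})(σ_i ⋯ σ_{n−1})`. For the full twist, with `A_i = σ_i ⋯ σ_{n−1}`, shifting
gives `A_i^j = (σ_{i+j−1} ⋯ σ_i) A_{i+1}^j`; hence `j_i A_{i+1}^{n−i} = A_i^{n−i+1}`, and
`j_1 ⋯ j_{n−1} = A_1^n = δ^n`.
-/

section

variable {n : ℕ}

lemma sgA_of {i : ℕ} (h1 : 1 ≤ i) (h2 : i ≤ n - 1) :
    sgA n i = PresentedGroup.of (⟨i - 1, by omega⟩ : Fin (n - 1)) :=
  dif_pos ⟨h1, h2⟩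

lemma sgA_of_not_mem {i : ℕ} (h : ¬(1 ≤ i ∧ i ≤ n - 1)) : sgA n i = 1 :=
  dif_neg h

lemma sgA_braid {i : ℕ} (h1 : 1 ≤ i) (h2 : i + 2 ≤ n) :
    sgA n i * sgA n (i + 1) * sgA n i = sgA n (i + 1) * sgA n i * sgA n (i + 1) := by
  rw [sgA_of h1 (by omega), sgA_of (by omega : 1 ≤ i + 1) (by omega)]
  refine PresentedGroup.mk_eq_mk_of_mul_inv_mem (Or.inl ⟨_, _, ?_, rfl⟩)
  simp only
  omega

lemma sgA_commute {i j : ℕ} (h : i + 2 ≤ j) : Commute (sgA n i) (sgA n j) := by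
  by_cases hi : 1 ≤ i ∧ i ≤ n - 1
  · by_cases hj : 1 ≤ j ∧ j ≤ n - 1
    · rw [sgA_of hi.1 hi.2, sgA_of hj.1 hj.2]
      refine PresentedGroup.mk_eq_mk_of_mul_inv_mem (Or.inr ⟨_, _, ?_, rfl⟩)
      simp only
      omega
    · rw [sgA_of_not_mem hj]
      exact Commute.one_right _
  · rw [sgA_of_not_mem hi]
    exact Commute.one_left _

variable (n) in
def sgAsc (a len : ℕ) : ArtinB n := ((List.range len).map fun t => sgA n (a + t)).prod

variable (n) in
def sgDesc (a len : ℕ) : ArtinB n := ((List.range len).reverse.map fun t => sgA n (a + t)).prod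

@[simp] lemma sgAsc_zero (a : ℕ) : sgAsc n a 0 = 1 := rfl

@[simp] lemma sgDesc_zero (a : ℕ) : sgDesc n a 0 = 1 := rfl

lemma sgAsc_succ (a len : ℕ) : sgAsc n a (len + 1) = sgA n a * sgAsc n (a + 1) len := by
  simp only [sgAsc, List.range_succ_eq_map, List.map_cons, List.map_map, List.prod_cons,
    Function.comp_def, Nat.succ_eq_add_one, add_zero, add_assoc, add_comm 1]

lemma sgAsc_succ' (a len : ℕ) : sgAsc n a (len + 1) = sgAsc n a len * sgA n (a + len) := by
  simp [sgAsc, List.range_succ]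

lemma sgAsc_add (a l₁ l₂ : ℕ) :
    sgAsc n a (l₁ + l₂) = sgAsc n a l₁ * sgAsc n (a + l₁) l₂ := by
  simp [sgAsc, List.range_add, Function.comp_def, add_assoc]

lemma sgDesc_succ (a len : ℕ) : sgDesc n a (len + 1) = sgA n (a + len) * sgDesc n a len := by
  simp [sgDesc, List.range_succ]

lemma sgDesc_one (a : ℕ) : sgDesc n a 1 = sgA n a := by
  simp [sgDesc]

lemma sgA_commute_sgAsc {k a : ℕ} (h : k + 2 ≤ a) (len : ℕ) :
    Commute (sgA n k) (sgAsc n a len) :=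
  Commute.list_prod_right _ _ fun _ hy => by
    obtain ⟨t, -, rfl⟩ := List.mem_map.1 hy
    exact sgA_commute (by omega)

lemma sgAsc_semiconjBy_sgA {a len k : ℕ} (ha : 1 ≤ a) (hak : a ≤ k) (hk : k + 2 ≤ a + len)
    (hn : a + len ≤ n) : SemiconjBy (sgAsc n a len) (sgA n k) (sgA n (k + 1)) := by
  induction len generalizing a with
  | zero => omega
  | succ len ih =>
    rcases hak.eq_or_lt with rfl | hlt
    · obtain ⟨m, rfl⟩ : ∃ m, len = m + 1 := ⟨len - 1, by omega⟩
      have hbraid : SemiconjBy (sgA n a * sgA n (a + 1)) (sgA n a) (sgA n (a + 1)) := by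
        simp only [SemiconjBy, ← mul_assoc, sgA_braid ha (by omega : a + 2 ≤ n)]
      rw [sgAsc_succ, sgAsc_succ, ← mul_assoc]
      exact hbraid.mul_left (sgA_commute_sgAsc le_rfl m).symm
    · rw [sgAsc_succ]
      exact SemiconjBy.mul_left (sgA_commute (by omega))
        (ih (by omega) (by omega) (by omega) (by omega))

lemma sgAsc_semiconjBy_sgAsc {a len b : ℕ} (ha : 1 ≤ a) (hab : a ≤ b) (hn : a + len ≤ n)
    {l : ℕ} (hl : b + l + 1 ≤ a + len) :
    SemiconjBy (sgAsc n a len) (sgAsc n b l) (sgAsc n (b + 1) l) := by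
  induction l with
  | zero => exact SemiconjBy.one_right _
  | succ l ih =>
    rw [sgAsc_succ', sgAsc_succ', Nat.add_right_comm]
    exact (ih (by omega)).mul_right (sgAsc_semiconjBy_sgA ha (by omega) (by omega) hn)

lemma sgAsc_mul_sgDesc {i m j : ℕ} (hi : 1 ≤ i) (hn : i + m + 1 ≤ n) (hj : j ≤ m) :
    sgAsc n i (m + 1) * sgDesc n i j = sgDesc n i (j + 1) * sgAsc n (i + 1) m := by
  induction j with
  | zero => rw [sgDesc_zero, mul_one, zero_add, sgDesc_one, sgAsc_succ]
  | succ j ih =>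
    rw [sgDesc_succ i j, ← mul_assoc,
      (sgAsc_semiconjBy_sgA hi (by omega) (by omega) (by omega)).eq, mul_assoc, ih (by omega),
      ← mul_assoc, Nat.add_assoc, ← sgDesc_succ]

lemma sgAsc_pow {i m j : ℕ} (hi : 1 ≤ i) (hn : i + m + 1 ≤ n) (hj : j ≤ m + 1) :
    sgAsc n i (m + 1) ^ j = sgDesc n i j * sgAsc n (i + 1) m ^ j := by
  induction j with
  | zero => simp
  | succ j ih =>
    rw [pow_succ', ih (by omega), ← mul_assoc, sgAsc_mul_sgDesc hi hn (by omega), mul_assoc,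
      ← pow_succ']

lemma halfTwist_eq_sgAsc : halfTwist n = sgAsc n 1 (n - 1) := by
  simp only [halfTwist, sgAsc, add_comm 1]

lemma halfTwist_eq_sgA_one_mul (hn : 2 ≤ n) : halfTwist n = sgA n 1 * sgAsc n 2 (n - 2) := by
  rw [halfTwist_eq_sgAsc, (congrArg (sgAsc n 1) (by omega : n - 1 = n - 2 + 1)).trans
    (sgAsc_succ 1 (n - 2))]

lemma sgDesc_eq_map_range_sub {i : ℕ} (hi : i ≤ n) :
    sgDesc n i (n - i) = ((List.range (n - i)).map fun t => sgA n (n - 1 - t)).prod := by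
  rw [sgDesc, List.range_eq_range', List.reverse_range', List.map_map, ← List.range_eq_range']
  refine congrArg List.prod (List.map_congr_left fun t ht => ?_)
  rw [List.mem_range] at ht
  simp only [Function.comp_apply]
  congr 1
  omega

lemma inv_sgAsc_eq_map_range_sub (a len : ℕ) :
    (sgAsc n a len)⁻¹ = ((List.range len).map fun t => (sgA n (a + len - 1 - t))⁻¹).prod := by
  rw [sgAsc, List.prod_inv_reverse, List.map_map, ← List.map_reverse, List.range_eq_range',
    List.reverse_range', List.map_map, ← List.range_eq_range']
  refine congrArg List.prod (List.map_congr_left fun t ht => ?_)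
  rw [List.mem_range] at ht
  simp only [Function.comp_apply]
  congr 2
  omega

lemma jmB_eq {i : ℕ} (hi : i ≤ n) : jmB n i = sgAsc n i (n - i) * sgDesc n i (n - i) := by
  rw [jmB, sgDesc_eq_map_range_sub hi, sgAsc]

lemma f0Target_eq (hn : 2 ≤ n) :
    f0Target n = (sgAsc n 2 (n - 2))⁻¹ * sgA n 1 * sgAsc n 2 (n - 2) := by
  rw [f0Target, inv_sgAsc_eq_map_range_sub, sgAsc, Nat.add_sub_cancel' hn]
  simp only [add_comm 2]

lemma prod_jmB {d i : ℕ} (hi : 1 ≤ i) (hd : i + d = n) :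
    ((List.range d).map fun t => jmB n (t + i)).prod = sgAsc n i d ^ (d + 1) := by
  induction d generalizing i with
  | zero => simp
  | succ d ih =>
    have htail : ((List.range d).map fun t => jmB n (t + 1 + i)).prod
        = sgAsc n (i + 1) d ^ (d + 1) := by
      simpa only [Nat.add_right_comm _ 1 i, add_assoc] using ih (by omega : 1 ≤ i + 1) (by omega)
    rw [List.range_succ_eq_map, List.map_cons, List.prod_cons, List.map_map, Function.comp_def]
    simp only [Nat.succ_eq_add_one, zero_add]
    rw [htail, jmB_eq (by omega), show n - i = d + 1 by omega, mul_assoc,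
      ← sgAsc_pow hi (by omega) le_rfl, ← pow_succ']

lemma halfTwist_semiconjBy {k : ℕ} (hk1 : 1 ≤ k) (hk : k + 2 ≤ n) :
    SemiconjBy (halfTwist n) (sgA n k) (sgA n (k + 1)) := by
  rw [halfTwist_eq_sgAsc]
  exact sgAsc_semiconjBy_sgA le_rfl hk1 (by omega) (by omega)

lemma halfTwist_pow_semiconjBy {k : ℕ} (hk : k ≤ n - 2) :
    SemiconjBy (halfTwist n ^ k) (sgA n 1) (sgA n (k + 1)) := by
  induction k with
  | zero => simp
  | succ k ih =>
    rw [pow_succ']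
    exact (halfTwist_semiconjBy (by omega) (by omega)).mul_left (ih (by omega))

lemma halfTwist_sq_semiconjBy (hn : 2 ≤ n) :
    SemiconjBy (halfTwist n ^ 2) (sgA n (n - 1)) (sgA n 1) := by
  have hlen : n - 1 = n - 2 + 1 := by omega
  have hlast : halfTwist n = sgAsc n 1 (n - 2) * sgA n (n - 1) := by
    rw [halfTwist_eq_sgAsc, (congrArg (sgAsc n 1) hlen).trans (sgAsc_succ' 1 (n - 2)),
      add_comm 1, ← hlen]
  have hshift : halfTwist n * sgAsc n 1 (n - 2) = sgAsc n 2 (n - 2) * halfTwist n := by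
    rw [halfTwist_eq_sgAsc]
    exact sgAsc_semiconjBy_sgAsc le_rfl le_rfl (by omega) (by omega)
  calc halfTwist n ^ 2 * sgA n (n - 1)
      = (sgA n 1 * sgAsc n 2 (n - 2)) * halfTwist n * sgA n (n - 1) := by
        rw [sq, ← halfTwist_eq_sgA_one_mul hn]
    _ = sgA n 1 * (halfTwist n * (sgAsc n 1 (n - 2) * sgA n (n - 1))) := by
        rw [mul_assoc (sgA n 1), ← hshift]; group
    _ = sgA n 1 * halfTwist n ^ 2 := by rw [← hlast, sq]

lemma commute_halfTwist_pow_self (hn : 2 ≤ n) : Commute (halfTwist n ^ n) (sgA n 1) := by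
  have hpow := halfTwist_pow_semiconjBy (n := n) le_rfl
  rw [show n - 2 + 1 = n - 1 by omega] at hpow
  have h := (halfTwist_sq_semiconjBy hn).mul_left hpow
  rwa [← pow_add, Nat.add_sub_cancel' hn] at h

-- `cylGen n x` is the image of `f_{x+1}`; by `cylGen_add_mul_self` it only depends on `x mod n`.
variable (n) in
def cylGen (x : ℤ) : ArtinB n := MulAut.conj (halfTwist n ^ x) (sgA n 1)

lemma cylGen_add (x y : ℤ) : cylGen n (x + y) = MulAut.conj (halfTwist n ^ x) (cylGen n y) := by
  rw [cylGen, cylGen, zpow_add, map_mul, MulAut.mul_apply]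

lemma cylGen_natCast {k : ℕ} (hk : k ≤ n - 2) : cylGen n k = sgA n (k + 1) := by
  rw [cylGen, zpow_natCast, MulAut.conj_apply, (halfTwist_pow_semiconjBy hk).eq,
    mul_inv_cancel_right]

lemma cylGen_add_natCast (x : ℤ) {k : ℕ} (hk : k ≤ n - 2) :
    cylGen n (x + k) = MulAut.conj (halfTwist n ^ x) (sgA n (k + 1)) := by
  rw [cylGen_add, cylGen_natCast hk]

lemma cylGen_mul_self (hn : 2 ≤ n) (k : ℤ) : cylGen n (n * k) = sgA n 1 := by
  rw [cylGen, zpow_mul, zpow_natCast, MulAut.conj_apply,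
    ((commute_halfTwist_pow_self hn).zpow_left k).eq, mul_inv_cancel_right]

lemma cylGen_add_mul_self (hn : 2 ≤ n) (x k : ℤ) : cylGen n (x + n * k) = cylGen n x := by
  rw [cylGen_add, cylGen_mul_self hn, cylGen]

lemma ZMod.exists_eq_add_natCast_of_ne [NeZero n] {i j : ZMod n} (h₁ : j ≠ i - 1)
    (h₂ : j ≠ i) (h₃ : j ≠ i + 1) : ∃ c : ℕ, 2 ≤ c ∧ c + 2 ≤ n ∧ j = i + c := by
  have hji : ((j - i).val : ZMod n) = j - i := ZMod.natCast_zmod_val _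
  have hlt := ZMod.val_lt (j - i)
  refine ⟨(j - i).val, ?_, ?_, by rw [hji, add_sub_cancel]⟩
  · by_contra! h
    rcases (by omega : (j - i).val = 0 ∨ (j - i).val = 1) with h | h
    · exact h₂ (sub_eq_zero.1 ((ZMod.val_eq_zero _).1 h))
    · rw [h, Nat.cast_one] at hji
      exact h₃ (by linear_combination -hji)
  · by_contra! h
    rw [show (j - i).val = n - 1 by omega, Nat.cast_sub (by omega), ZMod.natCast_self,
      Nat.cast_one, zero_sub] at hji
    exact h₁ (by linear_combination -hji)

variable (n) in
def flatGen : ExtGen n → ArtinB n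
  | .f i => cylGen n (i.val - 1)
  | .om => halfTwist n

lemma flatGen_f_intCast (hn : 2 ≤ n) (x : ℤ) : flatGen n (.f x) = cylGen n (x - 1) := by
  have : NeZero n := ⟨by omega⟩
  rw [flatGen, ZMod.val_intCast, Int.emod_def,
    show x - n * (x / n) - 1 = x - 1 + n * (-(x / n)) by ring, cylGen_add_mul_self hn]

lemma flatGen_rels (hn : 2 ≤ n) : ∀ r ∈ extRels n, FreeGroup.lift (flatGen n) r = 1 := by
  have : NeZero n := ⟨by omega⟩
  rintro r (⟨i, h3, rfl⟩ | ⟨i, j, h₁, h₂, h₃, rfl⟩ | ⟨i, rfl⟩) <;>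
    simp only [map_mul, map_inv, FreeGroup.lift_apply_of, mul_inv_eq_one] <;>
    obtain ⟨x, rfl⟩ := ZMod.intCast_surjective i
  · have hσ₁ := cylGen_add_natCast (n := n) (x - 1) (k := 0) (by omega)
    have hσ₂ := cylGen_add_natCast (n := n) (x - 1) (k := 1) (by omega)
    simp only [Nat.cast_zero, Nat.cast_one, add_zero, sub_add_cancel] at hσ₁ hσ₂
    rw [← Int.cast_one, ← Int.cast_add, flatGen_f_intCast hn, flatGen_f_intCast hn,
      add_sub_cancel_right, hσ₁, hσ₂, ← map_mul, ← map_mul, ← map_mul, ← map_mul,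
      sgA_braid le_rfl (by omega)]
  · obtain ⟨c, hc, hcn, rfl⟩ := ZMod.exists_eq_add_natCast_of_ne h₁ h₂ h₃
    have hσ₁ := cylGen_add_natCast (n := n) (x - 1) (k := 0) (by omega)
    have hσ₂ := cylGen_add_natCast (n := n) (x - 1) (k := c) (by omega)
    simp only [Nat.cast_zero, add_zero] at hσ₁
    rw [← Int.cast_natCast c, ← Int.cast_add, flatGen_f_intCast hn, flatGen_f_intCast hn,
      add_sub_right_comm, hσ₁, hσ₂, ← map_mul, ← map_mul, (sgA_commute (by omega)).eq]
  · rw [← Int.cast_one, ← Int.cast_add, flatGen_f_intCast hn, flatGen_f_intCast hn, flatGen,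
      add_sub_cancel_right, ← zpow_one (halfTwist n), ← MulAut.conj_apply, ← cylGen_add,
      add_sub_cancel]

variable (n) in
def flatHom (hn : 2 ≤ n) : BrExt n →* ArtinB n := PresentedGroup.toGroup (flatGen_rels hn)

lemma isFlattening_flatHom (hn : 2 ≤ n) : IsFlattening n (flatHom n hn) := by
  refine ⟨fun i h₁ h₂ => ?_, PresentedGroup.toGroup.of _⟩
  rw [flatHom, fB, PresentedGroup.toGroup.of, ← Int.cast_natCast, flatGen_f_intCast hn,
    show (i : ℤ) - 1 = 0 + (i - 1 : ℕ) by omega, cylGen_add_natCast 0 (by omega), zpow_zero,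
    map_one, MulAut.one_apply, Nat.sub_add_cancel h₁]

lemma omB_mul_fB_mul_inv (i : ZMod n) : omB n * fB n i * (omB n)⁻¹ = fB n (i + 1) := by
  have h :=
    PresentedGroup.mk_eq_mk_of_mul_inv_mem (rels := extRels n) (Or.inr (Or.inr ⟨i, rfl⟩))
  simp only [map_mul, map_inv] at h
  exact h

end

namespace IsFlattening

variable {n : ℕ} {φ : BrExt n →* ArtinB n}

lemma map_fB_zero (hφ : IsFlattening n φ) (hn : 2 ≤ n) : φ (fB n 0) = f0Target n := by
  have h := congrArg φ (omB_mul_fB_mul_inv (0 : ZMod n))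
  rw [zero_add, show (1 : ZMod n) = ((1 : ℕ) : ZMod n) from Nat.cast_one.symm,
    hφ.1 1 le_rfl (by omega), map_mul, map_mul, map_inv, hφ.2] at h
  rw [f0Target_eq hn, eq_inv_mul_iff_mul_eq.2 (mul_inv_eq_iff_eq_mul.1 h),
    halfTwist_eq_sgA_one_mul hn]
  group

lemma map_inv_prefix (hφ : IsFlattening n φ) {i : ℕ} (hi : i ≤ n) :
    φ (((List.range (i - 1)).reverse.map fun k => (fB n ((k + 1 : ℕ) : ZMod n))⁻¹).prod)
      = (sgAsc n 1 (i - 1))⁻¹ := by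
  rw [map_list_prod, List.map_map, sgAsc, List.prod_inv_reverse, List.map_map, ← List.map_reverse]
  refine congrArg List.prod (List.map_congr_left fun k hk => ?_)
  rw [List.mem_reverse, List.mem_range] at hk
  simp only [Function.comp_apply, map_inv, hφ.1 (k + 1) (by omega) (by omega), add_comm 1]

lemma map_suffix (hφ : IsFlattening n φ) {i : ℕ} (hi : 1 ≤ i) (hin : i ≤ n) :
    φ (((List.range (n - i)).map fun k => fB n ((n - 1 - k : ℕ) : ZMod n)).prod)
      = sgDesc n i (n - i) := by
  rw [map_list_prod, List.map_map, sgDesc_eq_map_range_sub hin]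
  refine congrArg List.prod (List.map_congr_left fun k hk => ?_)
  rw [List.mem_range] at hk
  exact hφ.1 _ (by omega) (by omega)

lemma map_yB (hφ : IsFlattening n φ) {i : ℕ} (hi : 1 ≤ i) (hin : i ≤ n) :
    φ (yB n i) = jmB n i := by
  have hsplit : halfTwist n = sgAsc n 1 (i - 1) * sgAsc n i (n - i) := by
    rw [halfTwist_eq_sgAsc, (congrArg (sgAsc n 1) (by omega : n - 1 = i - 1 + (n - i))).trans
      (sgAsc_add 1 (i - 1) (n - i)), Nat.add_sub_cancel' hi]
  rw [yB, map_mul, map_mul, hφ.map_inv_prefix hin, hφ.2, hφ.map_suffix hi hin, hsplit,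
    jmB_eq hin, inv_mul_cancel_left]

end IsFlattening

theorem statement_18 (n : ℕ) (hn : 2 ≤ n) :
    -- there exists a group homomorphism `flat : Br_extg → B_n` with the defining property …
    (∃ φ : BrExt n →* ArtinB n, IsFlattening n φ) ∧
    -- … and any such homomorphism necessarily satisfies:
    (∀ φ : BrExt n →* ArtinB n, IsFlattening n φ →
      -- `flat (f_0) = σ_{n−1}⁻¹ ⋯ σ_2⁻¹ · σ_1 · σ_2 ⋯ σ_{n−1}`
      φ (fB n 0) = f0Target n ∧
      -- `flat (y_n) = 1`
      φ (yB n n) = 1 ∧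
      -- `flat (y_i) = j_i` for `1 ≤ i ≤ n−1`
      (∀ i : ℕ, 1 ≤ i → i ≤ n - 1 → φ (yB n i) = jmB n i) ∧
      -- `flat (ω^n) = j_1 j_2 ⋯ j_{n−1}`, the full twist `(σ_1 σ_2 ⋯ σ_{n−1})^n`
      φ (omB n ^ n) = ((List.range (n - 1)).map (fun t => jmB n (t + 1))).prod ∧
      ((List.range (n - 1)).map (fun t => jmB n (t + 1))).prod = halfTwist n ^ n) := by
  have hfullTwist : ((List.range (n - 1)).map fun t => jmB n (t + 1)).prod = halfTwist n ^ n := by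
    rw [prod_jmB le_rfl (by omega), halfTwist_eq_sgAsc, Nat.sub_add_cancel (by omega)]
  refine ⟨⟨flatHom n hn, isFlattening_flatHom hn⟩, fun φ hφ => ⟨hφ.map_fB_zero hn, ?_,
    fun i hi hin => hφ.map_yB hi (by omega), by rw [map_pow, hφ.2, hfullTwist], hfullTwist⟩⟩
  rw [hφ.map_yB (by omega) le_rfl, jmB_eq le_rfl, Nat.sub_self, sgAsc_zero, sgDesc_zero, mul_one]
end
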